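/- arXiv:2408.07976 — 4 statements merged into one kernel-verified Lean document; each statement's English description precedes it below -/
import Mathlib

section
/- In the long-range percolation model with parameter β > 0 and coupling constants J, suppose there exist a real p > 1 and a constant J̄_p ≥ 0 such that ∑_{w ∈ V \ {u}} J(u, w)^{1/p} ≤ J̄_p for every u ∈ V (uniform p-summability). Then for every vertex v ∈ V and every integer n ≥ 1, setting v₀ := v, the sum over all n-tuples (v₁, …, v_n) of pairwise distinct vertices of V \ {v} of the quantity ℙ(⋂_{i=1}^n A_{v_{i−1}, v_i})^{1/p} is at most (β^{1/p} J̄_p)^n. -/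
/-!
Expanding the probability of a self-avoiding walk by independence of its (distinct) edges and
using `1 - e^{-x} ≤ x`, each summand is at most `∏ᵢ (β J(vᵢ₋₁, vᵢ))^{1/p}`. Forgetting
self-avoidance only enlarges the sum, which then factorises: by uniform `p`-summability each step
away from the current vertex contributes a factor at most `β^{1/p} J̄_p`.
-/

open MeasureTheory ProbabilityTheory Function

open scoped ENNReal

section Walks

variable {V : Type*}

theorem tsum_prod_walk_le_pow (f : V → V → ℝ≥0∞) {C : ℝ≥0∞} (hf : ∀ u, ∑' w, f u w ≤ C)
    (n : ℕ) (v : V) :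
    ∑' t : Fin n → V, ∏ i : Fin n, f ((Fin.cons v t : Fin (n + 1) → V) i.castSucc) (t i)
      ≤ C ^ n := by
  induction n generalizing v with
  | zero => simp
  | succ n ih =>
    calc ∑' t : Fin (n + 1) → V,
          ∏ i : Fin (n + 1), f ((Fin.cons v t : Fin (n + 2) → V) i.castSucc) (t i)
        = ∑' (w : V) (s : Fin n → V),
            f v w * ∏ i : Fin n, f ((Fin.cons w s : Fin (n + 1) → V) i.castSucc) (s i) := by
          rw [← (Fin.consEquiv fun _ => V).tsum_eq, ENNReal.tsum_prod']
          simp [Fin.prod_univ_succ, Fin.consEquiv]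
      _ = ∑' w : V, f v w *
            ∑' s : Fin n → V,
              ∏ i : Fin n, f ((Fin.cons w s : Fin (n + 1) → V) i.castSucc) (s i) := by
          simp_rw [ENNReal.tsum_mul_left]
      _ ≤ ∑' w : V, f v w * C ^ n := by gcongr with w; exact ih w
      _ = (∑' w : V, f v w) * C ^ n := ENNReal.tsum_mul_right
      _ ≤ C * C ^ n := by gcongr; exact hf v
      _ = C ^ (n + 1) := (pow_succ' C n).symm

theorem tsum_prod_injective_walk_le_pow (f : V → V → ℝ≥0∞) {C : ℝ≥0∞}
    (hf : ∀ u, ∑' w, f u w ≤ C) (n : ℕ) (v : V) :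
    ∑' γ : {g : Fin (n + 1) → V // Injective g ∧ g 0 = v},
      ∏ i : Fin n, f (γ.1 i.castSucc) (γ.1 i.succ) ≤ C ^ n := by
  have htail : Injective fun γ : {g : Fin (n + 1) → V // Injective g ∧ g 0 = v} => Fin.tail γ.1 :=
    fun γ γ' h => Subtype.ext <| by
      rw [← Fin.cons_self_tail γ.1, ← Fin.cons_self_tail γ'.1, γ.2.2, γ'.2.2]; exact congrArg _ h
  calc ∑' γ : {g : Fin (n + 1) → V // Injective g ∧ g 0 = v},
        ∏ i : Fin n, f (γ.1 i.castSucc) (γ.1 i.succ)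
      = ∑' γ : {g : Fin (n + 1) → V // Injective g ∧ g 0 = v},
          ∏ i : Fin n, f ((Fin.cons v (Fin.tail γ.1) : Fin (n + 1) → V) i.castSucc)
            (Fin.tail γ.1 i) := by
        refine tsum_congr fun ⟨γ, _, hγ₀⟩ => ?_
        subst hγ₀
        rw [Fin.cons_self_tail]
        rfl
    _ ≤ ∑' t : Fin n → V, ∏ i : Fin n, f ((Fin.cons v t : Fin (n + 1) → V) i.castSucc) (t i) :=
        ENNReal.tsum_comp_le_tsum_of_injective htail
          fun t => ∏ i : Fin n, f ((Fin.cons v t : Fin (n + 1) → V) i.castSucc) (t i)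
    _ ≤ C ^ n := tsum_prod_walk_le_pow f hf n v

theorem injective_sym2_mk_castSucc_succ {n : ℕ} {γ : Fin (n + 1) → V} (hγ : Injective γ) :
    Injective fun i : Fin n => s(γ i.castSucc, γ i.succ) := by
  intro i j h
  rcases Sym2.eq_iff.1 h with ⟨h₁, -⟩ | ⟨h₁, h₂⟩
  · exact Fin.castSucc_injective n (hγ h₁)
  · have h₁ := congrArg Fin.val (hγ h₁)
    have h₂ := congrArg Fin.val (hγ h₂)
    simp only [Fin.val_castSucc, Fin.val_succ] at h₁ h₂
    omega

end Walks

theorem ofReal_one_sub_exp_neg_rpow_le {x q : ℝ} (hx : 0 ≤ x) (hq : 0 ≤ q) :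
    ENNReal.ofReal (1 - Real.exp (-x)) ^ q ≤ ENNReal.ofReal (x ^ q) := by
  rw [← ENNReal.ofReal_rpow_of_nonneg hx hq]
  gcongr
  linarith [Real.one_sub_le_exp_neg x]

section Percolation

variable {V : Type*}

theorem measure_iInter_edges_eq_prod {Ω : Type*} [MeasurableSpace Ω] {P : Measure Ω}
    {A : V → V → Set Ω} (hA : ∀ u w, A u w = A w u)
    (hind : iIndepSet (fun e : {q : Sym2 V // ¬ q.IsDiag} => Sym2.lift ⟨A, hA⟩ e.1) P)
    {n : ℕ} {γ : Fin (n + 1) → V} (hγ : Injective γ) :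
    P (⋂ i : Fin n, A (γ i.castSucc) (γ i.succ)) =
      ∏ i : Fin n, P (A (γ i.castSucc) (γ i.succ)) := by
  let e : Fin n → {q : Sym2 V // ¬ q.IsDiag} := fun i =>
    ⟨s(γ i.castSucc, γ i.succ), by simpa using hγ.ne (Fin.castSucc_lt_succ (i := i)).ne⟩
  have he : Injective e := fun i j h =>
    injective_sym2_mk_castSucc_succ hγ (congrArg Subtype.val h)
  simpa [e] using (hind.precomp he).meas_biInter Finset.univ

noncomputable def edgeWeight (β : ℝ) (J : V → V → ℝ) (q : ℝ) (u : V) : V → ℝ≥0∞ :=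
  ({u}ᶜ : Set V).indicator fun w => ENNReal.ofReal ((β * J u w) ^ q)

theorem tsum_edgeWeight_le {β : ℝ} (hβ : 0 ≤ β) {J : V → V → ℝ} (hJ : ∀ u w, 0 ≤ J u w)
    {q Jbar : ℝ} (hsum : ∀ u : V,
      ∑' w : {x : V // x ≠ u}, ENNReal.ofReal (J u (w : V) ^ q) ≤ ENNReal.ofReal Jbar)
    (u : V) : ∑' w, edgeWeight β J q u w ≤ ENNReal.ofReal (β ^ q * Jbar) :=
  calc ∑' w, edgeWeight β J q u w
      = ∑' w : {x : V // x ≠ u}, ENNReal.ofReal (β ^ q) * ENNReal.ofReal (J u w ^ q) := by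
        rw [edgeWeight, ← tsum_subtype]
        refine tsum_congr fun w => ?_
        rw [Real.mul_rpow hβ (hJ u w), ENNReal.ofReal_mul (by positivity)]
    _ ≤ ENNReal.ofReal (β ^ q) * ENNReal.ofReal Jbar := by
        rw [ENNReal.tsum_mul_left]; gcongr; exact hsum u
    _ = ENNReal.ofReal (β ^ q * Jbar) := (ENNReal.ofReal_mul (by positivity)).symm

theorem measure_iInter_edges_rpow_le_prod_edgeWeight {Ω : Type*} [MeasurableSpace Ω]
    {P : Measure Ω} {A : V → V → Set Ω} (hA : ∀ u w, A u w = A w u)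
    (hind : iIndepSet (fun e : {q : Sym2 V // ¬ q.IsDiag} => Sym2.lift ⟨A, hA⟩ e.1) P)
    {β : ℝ} (hβ : 0 ≤ β) {J : V → V → ℝ} (hJ : ∀ u w, 0 ≤ J u w)
    (hprob : ∀ u w : V, u ≠ w → P (A u w) = ENNReal.ofReal (1 - Real.exp (-β * J u w)))
    {q : ℝ} (hq : 0 ≤ q) {n : ℕ} {γ : Fin (n + 1) → V} (hγ : Injective γ) :
    P (⋂ i : Fin n, A (γ i.castSucc) (γ i.succ)) ^ q
      ≤ ∏ i : Fin n, edgeWeight β J q (γ i.castSucc) (γ i.succ) := by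
  rw [measure_iInter_edges_eq_prod hA hind hγ, ← ENNReal.prod_rpow_of_nonneg hq]
  gcongr with i
  have hne := hγ.ne (Fin.castSucc_lt_succ (i := i)).ne
  rw [edgeWeight, Set.indicator_of_mem (Set.mem_compl_singleton_iff.2 hne.symm), hprob _ _ hne,
    neg_mul]
  exact ofReal_one_sub_exp_neg_rpow_le (mul_nonneg hβ (hJ _ _)) hq

end Percolation

theorem stmt6_general {Ω : Type*} [MeasurableSpace Ω] (P : Measure Ω)
    {V : Type*}
    (J : V → V → ℝ) (hJnn : ∀ u w, 0 ≤ J u w)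
    (β : ℝ) (hβ : 0 < β)
    (A : V → V → Set Ω)
    (hAsymm : ∀ u w, A u w = A w u)
    -- the edge events, indexed by unordered pairs of distinct vertices, are mutually independent
    (hind : iIndepSet (fun p : {q : Sym2 V // ¬ q.IsDiag} => Sym2.lift ⟨A, hAsymm⟩ p.1) P)
    -- the edge `{u,w}` is present with probability `1 - e^{-β J(u,w)}`
    (hprob : ∀ u w : V, u ≠ w → P (A u w) = ENNReal.ofReal (1 - Real.exp (-β * J u w)))
    -- uniform p-summability of the coupling constants
    (p : ℝ) (hp : 1 < p) (Jbp : ℝ)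
    (hsum : ∀ u : V,
      ∑' w : {x : V // x ≠ u}, ENNReal.ofReal (J u (w : V) ^ (1 / p)) ≤ ENNReal.ofReal Jbp)
    (v : V) (n : ℕ) :
    -- sum over tuples `v = v₀, v₁, …, v_n` of pairwise distinct vertices of
    -- P(v₀ ∼ v₁ ∼ ⋯ ∼ v_n is a SAW)^{1/p} is at most (β^{1/p} J̄_p)^n
    ∑' γ : {g : Fin (n + 1) → V // Function.Injective g ∧ g 0 = v},
      (P (⋂ i : Fin n, A (γ.1 i.castSucc) (γ.1 i.succ))) ^ (1 / p)
      ≤ ENNReal.ofReal (β ^ (1 / p) * Jbp) ^ n := by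
  have hq : 0 ≤ 1 / p := by positivity
  calc _ ≤ ∑' γ : {g : Fin (n + 1) → V // Injective g ∧ g 0 = v},
        ∏ i : Fin n, edgeWeight β J (1 / p) (γ.1 i.castSucc) (γ.1 i.succ) :=
        ENNReal.tsum_le_tsum fun γ =>
          measure_iInter_edges_rpow_le_prod_edgeWeight hAsymm hind hβ.le hJnn hprob hq γ.2.1
    _ ≤ _ := tsum_prod_injective_walk_le_pow _ (tsum_edgeWeight_le hβ.le hJnn hsum) n v

theorem stmt6 {Ω : Type*} [MeasurableSpace Ω] (P : Measure Ω) [IsProbabilityMeasure P]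
    {V : Type*} [Countable V]
    (J : V → V → ℝ) (hJnn : ∀ u w, 0 ≤ J u w) (hJsymm : ∀ u w, J u w = J w u)
    (β : ℝ) (hβ : 0 < β)
    (A : V → V → Set Ω) (hAmeas : ∀ u w, MeasurableSet (A u w))
    (hAsymm : ∀ u w, A u w = A w u)
    -- the edge events, indexed by unordered pairs of distinct vertices, are mutually independent
    (hind : iIndepSet (fun p : {q : Sym2 V // ¬ q.IsDiag} => Sym2.lift ⟨A, hAsymm⟩ p.1) P)
    -- the edge `{u,w}` is present with probability `1 - e^{-β J(u,w)}`
    (hprob : ∀ u w : V, u ≠ w → P (A u w) = ENNReal.ofReal (1 - Real.exp (-β * J u w)))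
    -- uniform p-summability of the coupling constants
    (p : ℝ) (hp : 1 < p) (Jbp : ℝ) (hJbp : 0 ≤ Jbp)
    (hsum : ∀ u : V,
      ∑' w : {x : V // x ≠ u}, ENNReal.ofReal (J u (w : V) ^ (1 / p)) ≤ ENNReal.ofReal Jbp)
    (v : V) (n : ℕ) (hn : 1 ≤ n) :
    -- sum over tuples `v = v₀, v₁, …, v_n` of pairwise distinct vertices of
    -- P(v₀ ∼ v₁ ∼ ⋯ ∼ v_n is a SAW)^{1/p} is at most (β^{1/p} J̄_p)^n
    ∑' γ : {g : Fin (n + 1) → V // Function.Injective g ∧ g 0 = v},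
      (P (⋂ i : Fin n, A (γ.1 i.castSucc) (γ.1 i.succ))) ^ (1 / p)
      ≤ ENNReal.ofReal (β ^ (1 / p) * Jbp) ^ n :=
  stmt6_general P J hJnn β hβ A hAsymm hind hprob p hp Jbp hsum v n
end

section
/- In the geometric random graph model with parameters s, S̄, K, for every vertex v ∈ V and every integer n ≥ 1, E[deg(v)^n] ≤ (K^{2s} S̄)^n, where the expectation is the Lebesgue integral with values in [0, ∞]. -/
/-!
Only `δ(v,w) < R_w` is needed for an edge, so `deg v ≤ ∑_w δ(v,w)^{-s} R_w^s`. Hölder's inequality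
with the weights `δ(v,w)^{-s}`, of total mass at most `S̄`, bounds the `n`-th power of this sum by
`S̄^{n-1} ∑_w δ(v,w)^{-s} R_w^{sn}`, whose expectation is at most `S̄^n K^{sn} ≤ (K^{2s} S̄)^n`.
-/

open MeasureTheory ProbabilityTheory ENNReal

theorem ENNReal.pow_sum_mul_le {ι : Type*} (s : Finset ι) (w f : ι → ℝ≥0∞) {n : ℕ}
    (hn : n ≠ 0) :
    (∑ i ∈ s, w i * f i) ^ n ≤ (∑ i ∈ s, w i) ^ (n - 1) * ∑ i ∈ s, w i * f i ^ n := by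
  have hn' : (n : ℝ) ≠ 0 := Nat.cast_ne_zero.2 hn
  have holder := ENNReal.inner_le_weight_mul_Lp_of_nonneg s (p := n)
    (Nat.one_le_cast.2 (Nat.one_le_iff_ne_zero.2 hn)) w f
  calc (∑ i ∈ s, w i * f i) ^ n
      ≤ ((∑ i ∈ s, w i) ^ (1 - (n : ℝ)⁻¹) *
          (∑ i ∈ s, w i * f i ^ (n : ℝ)) ^ (n : ℝ)⁻¹) ^ n := by
        gcongr
    _ = (∑ i ∈ s, w i) ^ (n - 1) * ∑ i ∈ s, w i * f i ^ n := by
        rw [mul_pow, ← rpow_mul_natCast, ← rpow_mul_natCast, inv_mul_cancel₀ hn', rpow_one,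
          sub_mul, one_mul, inv_mul_cancel₀ hn', ← Nat.cast_pred (Nat.pos_of_ne_zero hn),
          rpow_natCast]
        simp only [rpow_natCast]

theorem ENNReal.pow_tsum_mul_le {ι : Type*} (w f : ι → ℝ≥0∞) {n : ℕ} (hn : n ≠ 0) :
    (∑' i, w i * f i) ^ n ≤ (∑' i, w i) ^ (n - 1) * ∑' i, w i * f i ^ n := by
  refine le_of_tendsto' ((ENNReal.continuous_pow n).tendsto _ |>.comp
    ENNReal.summable.hasSum) fun s => ?_
  calc (∑ i ∈ s, w i * f i) ^ n
      ≤ (∑ i ∈ s, w i) ^ (n - 1) * ∑ i ∈ s, w i * f i ^ n :=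
        ENNReal.pow_sum_mul_le s w f hn
    _ ≤ (∑' i, w i) ^ (n - 1) * ∑' i, w i * f i ^ n := by
        gcongr <;> exact ENNReal.sum_le_tsum s

theorem one_le_ofReal_rpow_neg_mul_ofReal_pow {d r : ℝ} (hd : 0 < d) (hdr : d ≤ r) (s : ℕ) :
    1 ≤ ENNReal.ofReal d ^ (-(s : ℝ)) * ENNReal.ofReal r ^ s := by
  have hd0 : ENNReal.ofReal d ^ s ≠ 0 := pow_ne_zero _ (ENNReal.ofReal_pos.2 hd).ne'
  calc (1 : ℝ≥0∞) = (ENNReal.ofReal d ^ s)⁻¹ * ENNReal.ofReal d ^ s :=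
        (ENNReal.inv_mul_cancel hd0 (pow_ne_top ofReal_ne_top)).symm
    _ ≤ ENNReal.ofReal d ^ (-(s : ℝ)) * ENNReal.ofReal r ^ s := by
        rw [rpow_neg, rpow_natCast]
        gcongr

theorem lintegral_pow_tsum_mul_le {Ω ι : Type*} [MeasurableSpace Ω] [Countable ι]
    {μ : Measure Ω} (a : ι → ℝ≥0∞) {Y : ι → Ω → ℝ≥0∞} (hY : ∀ i, AEMeasurable (Y i) μ)
    {n : ℕ} (hn : n ≠ 0)
    {C : ℝ≥0∞} (hC : ∀ i, ∫⁻ ω, Y i ω ^ n ∂μ ≤ C) :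
    ∫⁻ ω, (∑' i, a i * Y i ω) ^ n ∂μ ≤ (∑' i, a i) ^ n * C := by
  have hYn : ∀ i, AEMeasurable (fun ω => Y i ω ^ n) μ := fun i => (hY i).pow_const n
  calc ∫⁻ ω, (∑' i, a i * Y i ω) ^ n ∂μ
      ≤ ∫⁻ ω, (∑' i, a i) ^ (n - 1) * ∑' i, a i * Y i ω ^ n ∂μ :=
        lintegral_mono fun ω => ENNReal.pow_tsum_mul_le a (fun i => Y i ω) hn
    _ = (∑' i, a i) ^ (n - 1) * ∑' i, a i * ∫⁻ ω, Y i ω ^ n ∂μ := by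
        rw [lintegral_const_mul'' _ (AEMeasurable.tsum fun i => (hYn i).const_mul _),
          lintegral_tsum fun i => (hYn i).const_mul _]
        simp_rw [lintegral_const_mul'' _ (hYn _)]
    _ ≤ (∑' i, a i) ^ (n - 1) * ∑' i, a i * C := by gcongr with i; exact hC i
    _ = (∑' i, a i) ^ n * C := by
        rw [ENNReal.tsum_mul_right, ← mul_assoc, ← pow_succ,
          Nat.sub_add_cancel (Nat.pos_of_ne_zero hn)]

theorem stmt7_general {Ω : Type*} [MeasurableSpace Ω] (P : Measure Ω)
    {M : Type*} [MetricSpace M] (V : Set M) (hVc : V.Countable)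
    -- the point set is well-spaced: ∑_{w ≠ v} δ(v,w)^{-s} ≤ S̄ for every v
    (s : ℕ) (hs : 1 < s) (Sb : ℝ)
    (hsum : ∀ v : V, ∑' w : {x : V // x ≠ v},
      ENNReal.ofReal (dist (v : M) (w.1 : M)) ^ (-(s : ℝ)) ≤ ENNReal.ofReal Sb)
    -- i.i.d. nonnegative grain radii with E[Z^n] ≤ K^n
    (R : V → Ω → ℝ) (hRmeas : ∀ v, Measurable (R v))
    (K : ℝ) (hK : 1 < K)
    (hmom : ∀ (v : V) (m : ℕ), 1 ≤ m →
      ∫⁻ ω, ENNReal.ofReal (R v ω) ^ m ∂P ≤ ENNReal.ofReal K ^ m)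
    (v : V) (n : ℕ) (hn : 1 ≤ n) :
    -- E[deg(v)^n] ≤ (K^{2s} S̄)^n
    ∫⁻ ω, (∑' w : {x : V // x ≠ v},
        Set.indicator {ω' | dist (v : M) (w.1 : M) < min (R v ω') (R w.1 ω')}
          (fun _ => (1 : ℝ≥0∞)) ω) ^ n ∂P
      ≤ ENNReal.ofReal (K ^ (2 * s) * Sb) ^ n := by
  have := hVc.to_subtype
  have hn0 : n ≠ 0 := Nat.one_le_iff_ne_zero.1 hn
  have hdeg : ∀ ω, ∑' w : {x : V // x ≠ v},
      Set.indicator {ω' | dist (v : M) (w.1 : M) < min (R v ω') (R w.1 ω')} (fun _ => 1) ω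
      ≤ ∑' w : {x : V // x ≠ v},
        ENNReal.ofReal (dist (v : M) (w.1 : M)) ^ (-(s : ℝ)) * ENNReal.ofReal (R w.1 ω) ^ s := by
    refine fun ω => ENNReal.tsum_le_tsum fun w =>
      Set.indicator_apply_le' (fun hω => ?_) fun _ => zero_le
    exact one_le_ofReal_rpow_neg_mul_ofReal_pow
      (dist_pos.2 fun h => w.2 (Subtype.ext h.symm)) (hω.trans_le (min_le_right _ _)).le s
  have hmom' : ∀ w : {x : V // x ≠ v},
      ∫⁻ ω, (ENNReal.ofReal (R w.1 ω) ^ s) ^ n ∂P ≤ ENNReal.ofReal K ^ (s * n) := by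
    simp_rw [← pow_mul]
    exact fun w => hmom w.1 _ (Nat.one_le_iff_ne_zero.2 (by positivity))
  calc _ ≤ _ := lintegral_mono fun ω => pow_le_pow_left' (hdeg ω) n
    _ ≤ ENNReal.ofReal Sb ^ n * ENNReal.ofReal K ^ (s * n) := by
        have hY (w : {x : V // x ≠ v}) :
            AEMeasurable (fun ω => ENNReal.ofReal (R w.1 ω) ^ s) P :=
          ((hRmeas w.1).ennreal_ofReal.pow_const s).aemeasurable
        refine (lintegral_pow_tsum_mul_le _ hY hn0 hmom').trans ?_
        gcongr
        exact hsum v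
    _ ≤ ENNReal.ofReal (K ^ (2 * s) * Sb) ^ n := by
        rw [ENNReal.ofReal_mul (by positivity), ENNReal.ofReal_pow (by linarith), mul_pow,
          ← pow_mul, mul_comm]
        gcongr
        · exact ENNReal.one_le_ofReal.2 hK.le
        · omega

theorem stmt7 {Ω : Type*} [MeasurableSpace Ω] (P : Measure Ω) [IsProbabilityMeasure P]
    {M : Type*} [MetricSpace M] (V : Set M) (hVc : V.Countable)
    -- the point set is well-spaced: ∑_{w ≠ v} δ(v,w)^{-s} ≤ S̄ for every v
    (s : ℕ) (hs : 1 < s) (Sb : ℝ) (hSb : 0 < Sb)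
    (hsum : ∀ v : V, ∑' w : {x : V // x ≠ v},
      ENNReal.ofReal (dist (v : M) (w.1 : M)) ^ (-(s : ℝ)) ≤ ENNReal.ofReal Sb)
    -- i.i.d. nonnegative grain radii with E[Z^n] ≤ K^n
    (R : V → Ω → ℝ) (hRmeas : ∀ v, Measurable (R v)) (hRnn : ∀ v ω, 0 ≤ R v ω)
    (hRind : iIndepFun R P)
    (hRid : ∀ v w : V, Measure.map (R v) P = Measure.map (R w) P)
    (K : ℝ) (hK : 1 < K)
    (hmom : ∀ (v : V) (m : ℕ), 1 ≤ m →
      ∫⁻ ω, ENNReal.ofReal (R v ω) ^ m ∂P ≤ ENNReal.ofReal K ^ m)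
    (v : V) (n : ℕ) (hn : 1 ≤ n) :
    -- E[deg(v)^n] ≤ (K^{2s} S̄)^n
    ∫⁻ ω, (∑' w : {x : V // x ≠ v},
        Set.indicator {ω' | dist (v : M) (w.1 : M) < min (R v ω') (R w.1 ω')}
          (fun _ => (1 : ℝ≥0∞)) ω) ^ n ∂P
      ≤ ENNReal.ofReal (K ^ (2 * s) * Sb) ^ n :=
  stmt7_general P V hVc s hs Sb hsum R hRmeas K hK hmom v n hn
end

section
/- In the geometric random graph model with parameters s, S̄, K, let p > 1 be a real number. Then for every vertex v ∈ V and every integer n ≥ 1, setting v₀ := v, the sum over all n-tuples (v₁, …, v_n) of pairwise distinct vertices of V \ {v} of the quantity ℙ(⋂_{i=1}^n {δ(v_{i−1}, v_i) < min(R_{v_{i−1}}, R_{v_i})})^{1/p} is at most K^{⌈sp⌉/p} · (S̄ · K^{⌈sp⌉/p})^n. -/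
/-!
On the event that `v₀, v₁, …, vₙ` is a self-avoiding walk, `R_{vᵢ} > δ(vᵢ₋₁, vᵢ)` for
`i = 1, …, n`. The `vᵢ` are distinct, so these events are independent, and Markov's inequality
for the `⌈sp⌉`-th moment bounds the `p`-th root of each probability by
`K^{⌈sp⌉/p} δ(vᵢ₋₁, vᵢ)^{-s}`. Summing the resulting products over walks one vertex at a time
costs a factor `S̄ K^{⌈sp⌉/p}` per step, and the prefactor `K^{⌈sp⌉/p}` is at least `1`.
-/

open MeasureTheory ProbabilityTheory
open scoped ENNReal

theorem tsum_prod_path_le_pow {α : Type*} (f : α → α → ℝ≥0∞) {C : ℝ≥0∞}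
    (hf : ∀ u, ∑' w, f u w ≤ C) (N : ℕ) (v : α) :
    ∑' g : {g : Fin (N + 1) → α // g 0 = v}, ∏ i : Fin N, f (g.1 i.castSucc) (g.1 i.succ)
      ≤ C ^ N := by
  induction N generalizing v with
  | zero =>
    have : Subsingleton {g : Fin 1 → α // g 0 = v} :=
      ⟨fun g g' => Subtype.ext <| funext fun i => by rw [Fin.fin_one_eq_zero i, g.2, g'.2]⟩
    simpa using ENat.toENNReal_le.mpr ENat.card_le_one
  | succ N ih =>
    have htail : Function.Injective fun g : {g : Fin (N + 2) → α // g 0 = v} => Fin.tail g.1 :=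
      fun g g' h => Subtype.ext <| by
        rw [← Fin.cons_self_tail g.1, ← Fin.cons_self_tail g'.1, g.2, g'.2]
        exact congrArg _ h
    calc ∑' g : {g : Fin (N + 2) → α // g 0 = v},
          ∏ i : Fin (N + 1), f (g.1 i.castSucc) (g.1 i.succ)
        = ∑' g : {g : Fin (N + 2) → α // g 0 = v}, f v (Fin.tail g.1 0) *
            ∏ i : Fin N, f (Fin.tail g.1 i.castSucc) (Fin.tail g.1 i.succ) :=
          tsum_congr fun g => by simp [Fin.prod_univ_succ, Fin.tail, g.2]
      _ ≤ ∑' h : Fin (N + 1) → α, f v (h 0) * ∏ i : Fin N, f (h i.castSucc) (h i.succ) :=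
          ENNReal.tsum_comp_le_tsum_of_injective htail
            (fun h => f v (h 0) * ∏ i : Fin N, f (h i.castSucc) (h i.succ))
      _ = ∑' w, ∑' h : (fun h : Fin (N + 1) → α => h 0) ⁻¹' {w},
            f v w * ∏ i : Fin N, f (h.1 i.castSucc) (h.1 i.succ) := by
          rw [← ENNReal.tsum_fiberwise _ (fun h : Fin (N + 1) → α => h 0)]
          exact tsum_congr fun w => tsum_congr fun h => by rw [show h.1 0 = w from h.2]
      _ ≤ ∑' w, f v w * C ^ N :=
          ENNReal.tsum_le_tsum fun w => by
            rw [ENNReal.tsum_mul_left]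
            exact mul_le_mul_right (ih w) _
      _ = (∑' w, f v w) * C ^ N := ENNReal.tsum_mul_right
      _ ≤ C ^ (N + 1) := by
          rw [pow_succ']
          exact mul_le_mul_left (hf v) _

section Tail

variable {Ω : Type*} [MeasurableSpace Ω] {P : Measure Ω} {X : Ω → ℝ} {k : ℝ≥0∞} {m : ℕ}

theorem measure_lt_le_div_pow_of_lintegral_pow_le (hX : AEMeasurable X P)
    (hmom : ∫⁻ ω, ENNReal.ofReal (X ω) ^ m ∂P ≤ k ^ m) {d : ℝ} (hd : 0 < d) :
    P {ω | d < X ω} ≤ k ^ m / ENNReal.ofReal d ^ m := by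
  have hd' : ENNReal.ofReal d ^ m ≠ 0 := pow_ne_zero m (ENNReal.ofReal_pos.mpr hd).ne'
  calc P {ω | d < X ω}
      ≤ P {ω | ENNReal.ofReal d ^ m ≤ ENNReal.ofReal (X ω) ^ m} :=
        measure_mono fun ω hω => pow_le_pow_left₀ zero_le (ENNReal.ofReal_le_ofReal hω.le) m
    _ ≤ (∫⁻ ω, ENNReal.ofReal (X ω) ^ m ∂P) / ENNReal.ofReal d ^ m :=
        meas_ge_le_lintegral_div (hX.ennreal_ofReal.pow_const m) hd'
          (ENNReal.pow_ne_top ENNReal.ofReal_ne_top)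
    _ ≤ k ^ m / ENNReal.ofReal d ^ m := ENNReal.div_le_div_right hmom _

theorem measure_lt_le_mul_rpow_of_lintegral_pow_le [IsProbabilityMeasure P]
    (hX : AEMeasurable X P) (hk : 1 ≤ k) (hmom : ∫⁻ ω, ENNReal.ofReal (X ω) ^ m ∂P ≤ k ^ m)
    {t : ℝ} (ht : 0 ≤ t) (htm : t ≤ m) {d : ℝ} (hd : 0 < d) :
    P {ω | d < X ω} ≤ k ^ m * ENNReal.ofReal d ^ (-t) := by
  rcases le_or_gt 1 d with hd1 | hd1
  · calc P {ω | d < X ω} ≤ k ^ m / ENNReal.ofReal d ^ m :=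
          measure_lt_le_div_pow_of_lintegral_pow_le hX hmom hd
      _ = k ^ m * ENNReal.ofReal d ^ (-(m : ℝ)) := by
          rw [ENNReal.rpow_neg, ENNReal.rpow_natCast, div_eq_mul_inv]
      _ ≤ k ^ m * ENNReal.ofReal d ^ (-t) := by
          gcongr
          exact ENNReal.one_le_ofReal.mpr hd1
  · calc P {ω | d < X ω} ≤ 1 := prob_le_one
      _ ≤ k ^ m * ENNReal.ofReal d ^ (-t) := by
          refine one_le_mul (one_le_pow₀ hk) ?_
          rw [ENNReal.rpow_neg, ENNReal.one_le_inv]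
          exact ENNReal.rpow_le_one (ENNReal.ofReal_le_one.mpr hd1.le) ht

theorem measure_lt_rpow_le_of_lintegral_pow_le [IsProbabilityMeasure P]
    (hX : AEMeasurable X P) (hk : 1 ≤ k) (hmom : ∫⁻ ω, ENNReal.ofReal (X ω) ^ m ∂P ≤ k ^ m)
    {p s : ℝ} (hp : 0 < p) (hs : 0 ≤ s) (hsp : s * p ≤ m) {d : ℝ} (hd : 0 < d) :
    P {ω | d < X ω} ^ (1 / p) ≤ k ^ ((m : ℝ) / p) * ENNReal.ofReal d ^ (-s) := by
  calc P {ω | d < X ω} ^ (1 / p)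
      ≤ (k ^ m * ENNReal.ofReal d ^ (-(s * p))) ^ (1 / p) := by
        gcongr
        exact measure_lt_le_mul_rpow_of_lintegral_pow_le hX hk hmom (by positivity) hsp hd
    _ = k ^ ((m : ℝ) / p) * ENNReal.ofReal d ^ (-s) := by
        rw [ENNReal.mul_rpow_of_nonneg _ _ (by positivity), ← ENNReal.rpow_natCast,
          ← ENNReal.rpow_mul, ← ENNReal.rpow_mul]
        congr 2 <;> field_simp

end Tail

theorem ProbabilityTheory.iIndepFun.measure_iInter_preimage_comp_eq_prod {Ω ι ι' β : Type*}
    [MeasurableSpace Ω] {P : Measure Ω} [MeasurableSpace β] {R : ι → Ω → β}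
    (hR : iIndepFun R P) [Fintype ι']
    {q : ι' → ι} (hq : q.Injective) {A : ι' → Set β} (hA : ∀ i, MeasurableSet (A i)) :
    P (⋂ i, R (q i) ⁻¹' A i) = ∏ i, P (R (q i) ⁻¹' A i) := by
  simpa using (hR.precomp hq).measure_inter_preimage_eq_mul Finset.univ fun i _ => hA i

theorem measure_iInter_dist_lt_min_rpow_le {Ω X : Type*} [MeasurableSpace Ω] {P : Measure Ω}
    [IsProbabilityMeasure P] [MetricSpace X] {R : X → Ω → ℝ} (hRmeas : ∀ x, Measurable (R x))
    (hRind : iIndepFun R P) {k : ℝ≥0∞} (hk : 1 ≤ k) {m : ℕ}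
    (hmom : ∀ x, ∫⁻ ω, ENNReal.ofReal (R x ω) ^ m ∂P ≤ k ^ m) {p s : ℝ} (hp : 0 < p)
    (hs : 0 ≤ s) (hsp : s * p ≤ m) {n : ℕ} {g : Fin (n + 1) → X} (hg : g.Injective) :
    P (⋂ i : Fin n, {ω | dist (g i.castSucc) (g i.succ)
        < min (R (g i.castSucc) ω) (R (g i.succ) ω)}) ^ (1 / p)
      ≤ ∏ i : Fin n,
          k ^ ((m : ℝ) / p) * ENNReal.ofReal (dist (g i.castSucc) (g i.succ)) ^ (-s) := by
  -- only the radius of the later endpoint of each edge is kept, so that the events are independent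
  calc P (⋂ i : Fin n, {ω | dist (g i.castSucc) (g i.succ)
        < min (R (g i.castSucc) ω) (R (g i.succ) ω)}) ^ (1 / p)
      ≤ P (⋂ i : Fin n, R (g i.succ) ⁻¹' Set.Ioi (dist (g i.castSucc) (g i.succ))) ^ (1 / p) := by
        gcongr
        exact fun ω (hω : _ < _) =>
          Set.mem_preimage.2 (Set.mem_Ioi.2 (hω.trans_le (min_le_right _ _)))
    _ = ∏ i : Fin n, P {ω | dist (g i.castSucc) (g i.succ) < R (g i.succ) ω} ^ (1 / p) := by
        rw [hRind.measure_iInter_preimage_comp_eq_prod (q := fun i : Fin n => g i.succ)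
          (hg.comp (Fin.succ_injective _)) (A := fun i => Set.Ioi (dist (g i.castSucc) (g i.succ)))
          fun _ => measurableSet_Ioi, ENNReal.prod_rpow_of_nonneg (by positivity)]
        rfl
    _ ≤ _ := Finset.prod_le_prod' fun i _ =>
        measure_lt_rpow_le_of_lintegral_pow_le (hRmeas _).aemeasurable hk (hmom _) hp hs hsp
          (dist_pos.mpr (hg.ne (Fin.castSucc_lt_succ (i := i)).ne))

theorem stmt8_general {Ω : Type*} [MeasurableSpace Ω] (P : Measure Ω) [IsProbabilityMeasure P]
    {M : Type*} [MetricSpace M] (V : Set M)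
    -- the point set is well-spaced: ∑_{w ≠ v} δ(v,w)^{-s} ≤ S̄ for every v
    (s : ℕ) (Sb : ℝ)
    (hsum : ∀ v : V, ∑' w : {x : V // x ≠ v},
      ENNReal.ofReal (dist (v : M) (w.1 : M)) ^ (-(s : ℝ)) ≤ ENNReal.ofReal Sb)
    -- i.i.d. nonnegative grain radii with E[Z^n] ≤ K^n
    (R : V → Ω → ℝ) (hRmeas : ∀ v, Measurable (R v))
    (hRind : iIndepFun R P)
    (K : ℝ) (hK : 1 < K)
    (hmom : ∀ (v : V) (m : ℕ), 1 ≤ m →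
      ∫⁻ ω, ENNReal.ofReal (R v ω) ^ m ∂P ≤ ENNReal.ofReal K ^ m)
    (p : ℝ) (hp : 1 < p)
    (v : V) (n : ℕ) :
    -- sum over tuples `v = v₀, v₁, …, v_n` of pairwise distinct vertices of
    -- P(v₀ ∼ v₁ ∼ ⋯ ∼ v_n is a SAW)^{1/p} is at most K^{⌈sp⌉/p} (S̄ K^{⌈sp⌉/p})^n
    ∑' γ : {g : Fin (n + 1) → ↥V // Function.Injective g ∧ g 0 = v},
      (P (⋂ i : Fin n, {ω | dist ((γ.1 i.castSucc : ↥V) : M) ((γ.1 i.succ : ↥V) : M)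
          < min (R (γ.1 i.castSucc) ω) (R (γ.1 i.succ) ω)})) ^ (1 / p)
      ≤ ENNReal.ofReal (K ^ ((⌈(s : ℝ) * p⌉ : ℝ) / p)) *
        (ENNReal.ofReal (Sb * K ^ ((⌈(s : ℝ) * p⌉ : ℝ) / p))) ^ n := by
  have hp0 : 0 < p := by linarith
  have hK0 : 0 < K := by linarith
  obtain ⟨m, hm⟩ : ∃ m : ℕ, ((⌈(s : ℝ) * p⌉ : ℤ) : ℝ) = m :=
    ⟨⌈(s : ℝ) * p⌉₊, by exact_mod_cast (Int.natCast_ceil_eq_ceil (by positivity)).symm⟩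
  have hsp : (s : ℝ) * p ≤ m := hm ▸ Int.le_ceil _
  have hmom' : ∀ v, ∫⁻ ω, ENNReal.ofReal (R v ω) ^ m ∂P ≤ ENNReal.ofReal K ^ m := fun v =>
    m.eq_zero_or_pos.elim (fun h => by simp [h]) (hmom v m)
  have hc : 1 ≤ ENNReal.ofReal (K ^ ((m : ℝ) / p)) :=
    ENNReal.one_le_ofReal.mpr (Real.one_le_rpow hK.le (by positivity))
  rw [hm]
  -- the diagonal is cut out because `ENNReal.ofReal (dist u u) ^ (-s) = ∞` for `s > 0`
  let f : V → V → ℝ≥0∞ := fun u => ({u}ᶜ : Set V).indicator fun w =>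
    ENNReal.ofReal K ^ ((m : ℝ) / p) * ENNReal.ofReal (dist u w) ^ (-(s : ℝ))
  have hf : ∀ {u w : V}, w ≠ u →
      f u w = ENNReal.ofReal K ^ ((m : ℝ) / p) * ENNReal.ofReal (dist u w) ^ (-(s : ℝ)) :=
    fun h => Set.indicator_of_mem h _
  have hrow : ∀ u, ∑' w, f u w ≤ ENNReal.ofReal (Sb * K ^ ((m : ℝ) / p)) := fun u => by
    rw [← tsum_subtype, ENNReal.tsum_mul_left, ENNReal.ofReal_mul' (by positivity),
      ENNReal.ofReal_rpow_of_pos hK0, mul_comm (ENNReal.ofReal Sb)]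
    exact mul_le_mul_right (hsum u) _
  calc _ ≤ ∑' γ : {g : Fin (n + 1) → V // g.Injective ∧ g 0 = v},
        ∏ i : Fin n, f (γ.1 i.castSucc) (γ.1 i.succ) :=
        ENNReal.tsum_le_tsum fun γ =>
          (measure_iInter_dist_lt_min_rpow_le hRmeas hRind (ENNReal.one_le_ofReal.mpr hK.le)
            hmom' hp0 (Nat.cast_nonneg s) hsp γ.2.1).trans_eq <| Finset.prod_congr rfl fun i _ =>
              (hf (γ.2.1.ne (Fin.castSucc_lt_succ (i := i)).ne')).symm
    _ ≤ ∑' g : {g : Fin (n + 1) → V // g 0 = v}, ∏ i : Fin n, f (g.1 i.castSucc) (g.1 i.succ) :=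
        ENNReal.tsum_comp_le_tsum_of_injective
          (Subtype.impEmbedding _ _ fun _ hg => hg.2).injective _
    _ ≤ ENNReal.ofReal (Sb * K ^ ((m : ℝ) / p)) ^ n := tsum_prod_path_le_pow f hrow n v
    _ ≤ _ := le_mul_of_one_le_left zero_le hc

theorem stmt8 {Ω : Type*} [MeasurableSpace Ω] (P : Measure Ω) [IsProbabilityMeasure P]
    {M : Type*} [MetricSpace M] (V : Set M) (hVc : V.Countable)
    -- the point set is well-spaced: ∑_{w ≠ v} δ(v,w)^{-s} ≤ S̄ for every v
    (s : ℕ) (hs : 1 < s) (Sb : ℝ) (hSb : 0 < Sb)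
    (hsum : ∀ v : V, ∑' w : {x : V // x ≠ v},
      ENNReal.ofReal (dist (v : M) (w.1 : M)) ^ (-(s : ℝ)) ≤ ENNReal.ofReal Sb)
    -- i.i.d. nonnegative grain radii with E[Z^n] ≤ K^n
    (R : V → Ω → ℝ) (hRmeas : ∀ v, Measurable (R v)) (hRnn : ∀ v ω, 0 ≤ R v ω)
    (hRind : iIndepFun R P)
    (hRid : ∀ v w : V, Measure.map (R v) P = Measure.map (R w) P)
    (K : ℝ) (hK : 1 < K)
    (hmom : ∀ (v : V) (m : ℕ), 1 ≤ m →
      ∫⁻ ω, ENNReal.ofReal (R v ω) ^ m ∂P ≤ ENNReal.ofReal K ^ m)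
    (p : ℝ) (hp : 1 < p)
    (v : V) (n : ℕ) (hn : 1 ≤ n) :
    -- sum over tuples `v = v₀, v₁, …, v_n` of pairwise distinct vertices of
    -- P(v₀ ∼ v₁ ∼ ⋯ ∼ v_n is a SAW)^{1/p} is at most K^{⌈sp⌉/p} (S̄ K^{⌈sp⌉/p})^n
    ∑' γ : {g : Fin (n + 1) → ↥V // Function.Injective g ∧ g 0 = v},
      (P (⋂ i : Fin n, {ω | dist ((γ.1 i.castSucc : ↥V) : M) ((γ.1 i.succ : ↥V) : M)
          < min (R (γ.1 i.castSucc) ω) (R (γ.1 i.succ) ω)})) ^ (1 / p)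
      ≤ ENNReal.ofReal (K ^ ((⌈(s : ℝ) * p⌉ : ℝ) / p)) *
        (ENNReal.ofReal (Sb * K ^ ((⌈(s : ℝ) * p⌉ : ℝ) / p))) ^ n :=
  stmt8_general P V s Sb hsum R hRmeas hRind K hK hmom p hp v n
end

section
/- Let G be a simple graph on a vertex set V, and let γ = v₀, v₁, …, v_n (with n ≥ 1 and v₀ = v) be a walk in the 2-step graph G⁺ (i.e., consecutive vertices are adjacent in G⁺). Then there exists a sequence γ' = w₀, w₁, …, w_l with w₀ = v and w_l = v_n such that: γ' is a self-avoiding walk (path) in G⁺; γ' belongs to SAW*_G(v), i.e., γ' is a remnant of some self-avoiding walk in G starting at v; and the vertex sequence w₀, …, w_l is a subsequence of v₀, v₁, …, v_n (there exist indices 0 = k₀ < k₁ < ⋯ < k_l = n with w_j = v_{k_j} for all j). -/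
/-- The 2-step graph `G⁺` of a simple graph `G`: distinct vertices are adjacent iff they are
adjacent in `G` or have a common `G`-neighbour. -/
def twoStep {V : Type*} (G : SimpleGraph V) : SimpleGraph V where
  Adj u w := u ≠ w ∧ (G.Adj u w ∨ ∃ z, G.Adj u z ∧ G.Adj z w)
  symm := ⟨by
    rintro u w ⟨hne, h⟩
    refine ⟨hne.symm, ?_⟩
    rcases h with h | ⟨z, h1, h2⟩
    · exact Or.inl h.symm
    · exact Or.inr ⟨z, h2.symm, h1.symm⟩⟩
  loopless := ⟨fun u h => h.1 rfl⟩

/-- `IsRemnant G γ γ'` says that the walk `γ'` in `G` is obtained from the vertex sequence `γ`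
(whose consecutive vertices are adjacent in `G⁺`) by inserting, between each consecutive pair
not adjacent in `G`, a single common `G`-neighbour, and leaving `G`-adjacent pairs unaltered. -/
inductive IsRemnant {V : Type*} (G : SimpleGraph V) : List V → List V → Prop
  | nil : IsRemnant G [] []
  | single (v : V) : IsRemnant G [v] [v]
  | adj {u w : V} {l l' : List V} (h : G.Adj u w)
      (hrest : IsRemnant G (w :: l) (w :: l')) :
      IsRemnant G (u :: w :: l) (u :: w :: l')
  | ins {u w z : V} {l l' : List V} (hnadj : ¬ G.Adj u w) (h1 : G.Adj u z) (h2 : G.Adj z w)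
      (hrest : IsRemnant G (w :: l) (w :: l')) :
      IsRemnant G (u :: w :: l) (u :: z :: w :: l')

/-! The path `γ''` is obtained by erasing loops from `γ` while it is being read. After each
prefix of `γ` we keep a subsequence `c` of it, with the same endpoints, that is the remnant of a
path `d` of `G`. Let the next vertex `x` be `G⁺`-adjacent to the last vertex `u` of `c`. If `x`
already lies on `d`, we cut `c` and `d` back to it. Otherwise `x` is reached from a `G`-neighbour
`y` (`u` itself, or a common neighbour of `u` and `x`): if `y` lies on `d` we cut back to `y`
(to its predecessor if `y` was an inserted vertex) and append `x`, and if not, we append `y`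
and `x` as fresh vertices. -/

section RemnantErasure

open List

theorem List.IsPrefix.head?_eq {α : Type*} {l₁ l₂ : List α} (h : l₁ <+: l₂) (hne : l₁ ≠ []) :
    l₁.head? = l₂.head? := by
  obtain ⟨t, rfl⟩ := h
  exact (List.head?_append_of_ne_nil _ hne).symm

theorem List.Nodup.append_singleton {α : Type*} {l : List α} {a : α} (hl : l.Nodup)
    (ha : a ∉ l) : (l ++ [a]).Nodup := by
  simpa using hl.concat ha

namespace IsRemnant

variable {V : Type*} {G : SimpleGraph V} {c d : List V} {u w x : V}

theorem sublist (h : IsRemnant G c d) : c <+ d := by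
  induction h with
  | nil | single => exact List.Sublist.refl _
  | adj _ _ ih => exact ih.cons_cons _
  | ins _ _ _ _ ih => exact (ih.cons _).cons_cons _

theorem head?_eq (h : IsRemnant G c d) : c.head? = d.head? := by
  cases h <;> rfl

theorem isChain_adj (h : IsRemnant G c d) : d.IsChain G.Adj := by
  induction h with
  | nil => exact .nil
  | single => exact .singleton _
  | adj hG _ ih => exact ih.cons_cons hG
  | ins _ h₁ h₂ _ ih => exact (ih.cons_cons h₂).cons_cons h₁

theorem isChain_twoStep (h : IsRemnant G c d) (hd : d.Nodup) : c.IsChain (twoStep G).Adj := by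
  induction h with
  | nil => exact .nil
  | single => exact .singleton _
  | adj hG _ ih => exact (ih (List.nodup_cons.1 hd).2).cons_cons ⟨hG.ne, .inl hG⟩
  | @ins a w z _ _ _ h₁ h₂ _ ih =>
    have haw : a ≠ w := fun haw => (List.nodup_cons.1 hd).1 (by simp [haw])
    exact (ih (List.nodup_cons.1 (List.nodup_cons.1 hd).2).2).cons_cons ⟨haw, .inr ⟨z, h₁, h₂⟩⟩

theorem cons_of_adj (h : IsRemnant G c d) (hc : c.head? = some w) (hu : G.Adj u w) :
    IsRemnant G (u :: c) (u :: d) := by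
  cases h <;> cases hc
  · exact .adj hu (.single w)
  · exact .adj hu (.adj ‹_› ‹_›)
  · exact .adj hu (.ins ‹_› ‹_› ‹_› ‹_›)

theorem cons_of_ins (h : IsRemnant G c d) (hc : c.head? = some w) (hn : ¬ G.Adj u w)
    (h₁ : G.Adj u x) (h₂ : G.Adj x w) : IsRemnant G (u :: c) (u :: x :: d) := by
  cases h <;> cases hc
  · exact .ins hn h₁ h₂ (.single w)
  · exact .ins hn h₁ h₂ (.adj ‹_› ‹_›)
  · exact .ins hn h₁ h₂ (.ins ‹_› ‹_› ‹_› ‹_›)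

theorem append {c' d' : List V} (h : IsRemnant G c d) (hc : c.getLast? = some u)
    (h' : IsRemnant G (u :: c') (u :: d')) : IsRemnant G (c ++ c') (d ++ d') := by
  induction h with
  | nil => cases hc
  | single => cases hc; exact h'
  | adj hG _ ih => exact .adj hG (ih (by simpa using hc))
  | ins hn h₁ h₂ _ ih => exact .ins hn h₁ h₂ (ih (by simpa using hc))

theorem exists_prefix_of_append {c₁ c₂ : List V} (h : IsRemnant G (c₁ ++ c₂) d) (hc₁ : c₁ ≠ []) :
    ∃ d₁, d₁ <+: d ∧ IsRemnant G c₁ d₁ := by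
  induction c₁ generalizing d with
  | nil => exact absurd rfl hc₁
  | cons a t ih =>
    rcases t with _ | ⟨b, t⟩
    · obtain ⟨l, rfl⟩ : ∃ l, d = a :: l := by
        cases h <;> exact ⟨_, rfl⟩
      exact ⟨[a], by simp, .single a⟩
    · cases h with
      | adj hG hrest =>
        obtain ⟨d₁, hpre, hrem⟩ := ih hrest (List.cons_ne_nil _ _)
        exact ⟨a :: d₁, (List.prefix_cons_inj a).2 hpre, hrem.cons_of_adj rfl hG⟩
      | ins hn h₁ h₂ hrest =>
        obtain ⟨d₁, hpre, hrem⟩ := ih hrest (List.cons_ne_nil _ _)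
        exact ⟨_ :: _ :: d₁, by simpa using hpre, hrem.cons_of_ins rfl hn h₁ h₂⟩

theorem exists_prefix_getLast?_eq (h : IsRemnant G c d) (hx : x ∈ c) :
    ∃ c₁ d₁, c₁ <+: c ∧ d₁ <+: d ∧ c₁.getLast? = some x ∧ IsRemnant G c₁ d₁ := by
  obtain ⟨s, t, rfl⟩ := List.append_of_mem hx
  obtain ⟨d₁, hd₁, hrem⟩ :=
    exists_prefix_of_append (c₁ := s ++ [x]) (c₂ := t) (by simpa using h) (by simp)
  exact ⟨s ++ [x], d₁, by simp, hd₁, by simp, hrem⟩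

theorem exists_prefix_adj_of_not_mem (h : IsRemnant G c d) (hxd : x ∈ d) (hxc : x ∉ c) :
    ∃ c₁ d₁ u, c₁ <+: c ∧ d₁ ++ [x] <+: d ∧ c₁.getLast? = some u ∧ G.Adj u x ∧
      IsRemnant G c₁ d₁ := by
  induction h with
  | nil => cases hxd
  | single => exact absurd hxd hxc
  | @adj a w l l' hG _ ih =>
    have hxa : x ≠ a := by rintro rfl; simp at hxc
    obtain ⟨c₁, d₁, u, hc₁, hd₁, hlast, hux, hrem⟩ :=
      ih (by simpa [hxa] using hxd) (by simp_all)
    have hne : c₁ ≠ [] := by rintro rfl; cases hlast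
    exact ⟨a :: c₁, a :: d₁, u, (List.prefix_cons_inj a).2 hc₁, (List.prefix_cons_inj a).2 hd₁,
      by simp [List.getLast?_cons, hlast], hux, hrem.cons_of_adj (hc₁.head?_eq hne) hG⟩
  | @ins a w z l l' hn h₁ h₂ _ ih =>
    by_cases hxz : x = z
    · subst hxz
      exact ⟨[a], [a], a, by simp, by simp, rfl, h₁, .single a⟩
    have hxa : x ≠ a := by rintro rfl; simp at hxc
    obtain ⟨c₁, d₁, u, hc₁, hd₁, hlast, hux, hrem⟩ :=
      ih (by simpa [hxa, hxz] using hxd) (by simp_all)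
    have hne : c₁ ≠ [] := by rintro rfl; cases hlast
    exact ⟨a :: c₁, a :: z :: d₁, u, (List.prefix_cons_inj a).2 hc₁, by simpa using hd₁,
      by simp [List.getLast?_cons, hlast], hux, hrem.cons_of_ins (hc₁.head?_eq hne) hn h₁ h₂⟩

end IsRemnant

variable {V : Type*} {G : SimpleGraph V} {c c₁ d d₁ : List V} {u x y : V}

def IsShortcut (G : SimpleGraph V) (γ c : List V) : Prop :=
  c <+ γ ∧ c.head? = γ.head? ∧ c.getLast? = γ.getLast? ∧ ∃ d, d.Nodup ∧ IsRemnant G c d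

theorem isShortcut_of_prefix (hc₁ : c₁ <+: c) (hlast : c₁.getLast? = some x) (hd₁ : d₁.Nodup)
    (h : IsRemnant G c₁ d₁) : IsShortcut G (c ++ [x]) c₁ := by
  have hc₁' : c₁ <+: c ++ [x] := hc₁.trans (List.prefix_append c [x])
  have hne : c₁ ≠ [] := by rintro rfl; cases hlast
  exact ⟨hc₁'.sublist, hc₁'.head?_eq hne, by simp [hlast], d₁, hd₁, h⟩

theorem isShortcut_append_of_prefix (hc₁ : c₁ <+: c) (hne : c₁ ≠ []) (hd₁ : d₁.Nodup)
    (h : IsRemnant G (c₁ ++ [x]) d₁) : IsShortcut G (c ++ [x]) (c₁ ++ [x]) :=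
  ⟨hc₁.sublist.append_right _, by simp only [List.head?_append, hc₁.head?_eq hne], by simp,
    d₁, hd₁, h⟩

theorem IsShortcut.append {γ c' : List V} (h : IsShortcut G γ c) (hγ : γ ≠ [])
    (h' : IsShortcut G (c ++ [x]) c') : IsShortcut G (γ ++ [x]) c' := by
  obtain ⟨hsub, hhead, hlast, -⟩ := h
  obtain ⟨hsub', hhead', hlast', hrem'⟩ := h'
  have hc : c ≠ [] := by
    rintro rfl
    simp [eq_comm, List.getLast?_eq_none_iff, hγ] at hlast
  refine ⟨hsub'.trans (hsub.append_right _), ?_, by simpa using hlast', hrem'⟩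
  rw [hhead', List.head?_append_of_ne_nil _ hc, List.head?_append_of_ne_nil _ hγ, hhead]

theorem IsRemnant.exists_isShortcut_of_adj (h : IsRemnant G c d) (hd : d.Nodup) (hy : y ∈ d)
    (hyx : G.Adj y x) (hx : x ∉ d) : ∃ c', IsShortcut G (c ++ [x]) c' := by
  by_cases hyc : y ∈ c
  · obtain ⟨c₁, d₁, hc₁, hd₁, hlast, hrem⟩ := h.exists_prefix_getLast?_eq hyc
    have hne : c₁ ≠ [] := by rintro rfl; cases hlast
    exact ⟨_, isShortcut_append_of_prefix hc₁ hne
      ((hd.sublist hd₁.sublist).append_singleton fun hx' => hx (hd₁.subset hx'))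
      (hrem.append hlast (.adj hyx (.single x)))⟩
  obtain ⟨c₁, d₁, u, hc₁, hd₁, hlast, huy, hrem⟩ := h.exists_prefix_adj_of_not_mem hy hyc
  have hne : c₁ ≠ [] := by rintro rfl; cases hlast
  have hd₁y : (d₁ ++ [y]).Nodup := hd.sublist hd₁.sublist
  have hd₁yx : (d₁ ++ [y] ++ [x]).Nodup := hd₁y.append_singleton fun hx' => hx (hd₁.subset hx')
  by_cases hux : G.Adj u x
  · exact ⟨_, isShortcut_append_of_prefix hc₁ hne (hd₁yx.sublist (by simp))
      (hrem.append hlast (.adj hux (.single x)))⟩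
  · exact ⟨_, isShortcut_append_of_prefix hc₁ hne (by simpa using hd₁yx)
      (hrem.append hlast (.ins hux huy hyx (.single x)))⟩

theorem IsRemnant.exists_isShortcut_append (h : IsRemnant G c d) (hd : d.Nodup)
    (hc : c.getLast? = some u) (hux : (twoStep G).Adj u x) : ∃ c', IsShortcut G (c ++ [x]) c' := by
  by_cases hxc : x ∈ c
  · obtain ⟨c₁, d₁, hc₁, hd₁, hlast, hrem⟩ := h.exists_prefix_getLast?_eq hxc
    exact ⟨c₁, isShortcut_of_prefix hc₁ hlast (hd.sublist hd₁.sublist) hrem⟩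
  by_cases hxd : x ∈ d
  · obtain ⟨c₁, d₁, u', hc₁, hd₁, hlast, hu'x, hrem⟩ := h.exists_prefix_adj_of_not_mem hxd hxc
    have hne : c₁ ≠ [] := by rintro rfl; cases hlast
    exact ⟨_, isShortcut_append_of_prefix hc₁ hne (hd.sublist hd₁.sublist)
      (hrem.append hlast (.adj hu'x (.single x)))⟩
  by_cases hG : G.Adj u x
  · exact h.exists_isShortcut_of_adj hd (h.sublist.subset (List.mem_of_getLast? hc)) hG hxd
  obtain ⟨z, h₁, h₂⟩ := hux.2.resolve_left hG
  by_cases hzd : z ∈ d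
  · exact h.exists_isShortcut_of_adj hd hzd h₂ hxd
  have hne : c ≠ [] := by rintro rfl; cases hc
  have hdzx : (d ++ [z] ++ [x]).Nodup :=
    (hd.append_singleton hzd).append_singleton (by simp [hxd, h₂.ne'])
  exact ⟨_, isShortcut_append_of_prefix (List.prefix_refl c) hne (by simpa using hdzx)
    (h.append hc (.ins hG h₁ h₂ (.single x)))⟩

theorem exists_isShortcut {γ : List V} (hγ : γ ≠ []) (hwalk : γ.IsChain (twoStep G).Adj) :
    ∃ c, IsShortcut G γ c := by
  induction γ using List.reverseRecOn with
  | nil => exact absurd rfl hγ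
  | append_singleton ys x ih =>
    rcases eq_or_ne ys [] with rfl | hys
    · exact ⟨[x], by simp, rfl, rfl, [x], List.nodup_singleton x, .single x⟩
    obtain ⟨hys_walk, -, hlast⟩ := List.isChain_append.1 hwalk
    obtain ⟨c, hc⟩ := ih hys hys_walk
    obtain ⟨d, hd, hrem⟩ := hc.2.2.2
    have hu : ys.getLast? = some (ys.getLast hys) := List.getLast?_eq_some_getLast hys
    obtain ⟨c', hc'⟩ := hrem.exists_isShortcut_append hd (hc.2.2.1.trans hu) (hlast _ hu x rfl)
    exact ⟨c', hc.append hys hc'⟩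

end RemnantErasure

theorem stmt9_general {V : Type*} (G : SimpleGraph V) (v : V) (γ : List V)
    (hhead : γ.head? = some v)
    (hwalk : γ.Chain' (twoStep G).Adj) :
    ∃ γ'' : List V,
      -- γ'' is a subsequence of γ with the same first and last vertices
      γ''.Sublist γ ∧ γ''.head? = some v ∧ γ''.getLast? = γ.getLast? ∧
      -- γ'' is a self-avoiding walk in G⁺
      γ''.Chain' (twoStep G).Adj ∧ γ''.Nodup ∧
      -- γ'' is a remnant of a self-avoiding walk in G starting at v
      ∃ δ : List V, δ.Chain' G.Adj ∧ δ.Nodup ∧ δ.head? = some v ∧ IsRemnant G γ'' δ := by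
  have hγ : γ ≠ [] := by rintro rfl; cases hhead
  obtain ⟨c, hsub, hchead, hclast, d, hd, hrem⟩ := exists_isShortcut hγ hwalk
  have hvc : c.head? = some v := hchead.trans hhead
  exact ⟨c, hsub, hvc, hclast, hrem.isChain_twoStep hd, hd.sublist hrem.sublist,
    d, hrem.isChain_adj, hd, hrem.head?_eq ▸ hvc, hrem⟩

theorem stmt9 {V : Type*} (G : SimpleGraph V) (v : V) (γ : List V)
    (hlen : 2 ≤ γ.length) (hhead : γ.head? = some v)
    (hwalk : γ.Chain' (twoStep G).Adj) :
    ∃ γ'' : List V,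
      -- γ'' is a subsequence of γ with the same first and last vertices
      γ''.Sublist γ ∧ γ''.head? = some v ∧ γ''.getLast? = γ.getLast? ∧
      -- γ'' is a self-avoiding walk in G⁺
      γ''.Chain' (twoStep G).Adj ∧ γ''.Nodup ∧
      -- γ'' is a remnant of a self-avoiding walk in G starting at v
      ∃ δ : List V, δ.Chain' G.Adj ∧ δ.Nodup ∧ δ.head? = some v ∧ IsRemnant G γ'' δ :=
  stmt9_general G v γ hhead hwalk
end
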